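/- arXiv:2603.23380 — 7 statements merged into one kernel-verified Lean document; each statement's English description precedes it below -/
import Mathlib

section
/- For every integer n ≥ 1, the alternating sum of excedances over all permutations of a set of size 2n vanishes: S_{2n} = ∑_{σ ∈ Perm(Fin (2n))} (-1)^{exc(σ)} = 0. -/
/-- The excedance number of a permutation: the number of indices `i` with `σ i > i`. -/
def exc {n : ℕ} (σ : Equiv.Perm (Fin n)) : ℕ :=
  (Finset.univ.filter fun i : Fin n => i < σ i).card

/-- The alternating sum of excedances over all permutations of `Fin n`. -/
def S (n : ℕ) : ℤ :=
  ∑ σ : Equiv.Perm (Fin n), (-1 : ℤ) ^ exc σ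

open Finset

lemma exc_key {m : ℕ} [NeZero m] (σ : Equiv.Perm (Fin m)) :
    exc ((Equiv.addRight (1 : Fin m)).trans (σ⁻¹ : Equiv.Perm (Fin m))) + exc σ + 1 = m := by
  classical
  have hm : 0 < m := Nat.pos_of_ne_zero (NeZero.ne m)
  -- the filter sets
  set A : Finset (Fin m) := univ.filter (fun i => i < σ⁻¹ (i + 1)) with hA
  set B : Finset (Fin m) := univ.filter (fun j => σ j ≤ j ∧ σ j ≠ 0) with hB
  set Cs : Finset (Fin m) := univ.filter (fun j => σ j ≤ j) with hC
  have hexc : exc ((Equiv.addRight (1 : Fin m)).trans (σ⁻¹ : Equiv.Perm (Fin m))) = A.card := by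
    unfold exc
    congr 1
  have hAB : A.card = B.card := by
    apply Finset.card_bij (fun i _ => σ⁻¹ (i + 1))
    · intro i hi
      simp only [hA, mem_filter, mem_univ, true_and] at hi
      simp only [hB, mem_filter, mem_univ, true_and]
      have hlt : (i : ℕ) < (σ⁻¹ (i+1) : Fin m).1 := hi
      have hi1 : ((i + 1 : Fin m) : ℕ) = (i : ℕ) + 1 := by
        have : (i : ℕ) + 1 < m := by
          have := (σ⁻¹ (i+1) : Fin m).2; omega
        simp [Fin.add_def, Nat.mod_eq_of_lt this]
      constructor
      · have : σ (σ⁻¹ (i+1)) = i + 1 := Equiv.apply_symm_apply σ _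
        rw [this, Fin.le_def, hi1]; omega
      · have : σ (σ⁻¹ (i+1)) = i + 1 := Equiv.apply_symm_apply σ _
        rw [this]
        intro h0
        rw [Fin.ext_iff] at h0
        simp [hi1] at h0
    · intro a ha b hb hab
      have := σ⁻¹.injective hab
      have := add_right_cancel this
      exact this
    · intro j hj
      simp only [hB, mem_filter, mem_univ, true_and] at hj
      obtain ⟨hle, hne⟩ := hj
      have h1 : 1 ≤ (σ j : Fin m).1 := by
        rcases Nat.eq_zero_or_pos (σ j : Fin m).1 with h | h
        · exact absurd (Fin.ext (by simp [h])) hne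
        · omega
      refine ⟨⟨(σ j).1 - 1, by have := (σ j).2; omega⟩, ?_, ?_⟩
      · have heq : (⟨(σ j).1 - 1, by have := (σ j).2; omega⟩ : Fin m) + 1 = σ j := by
          rw [Fin.ext_iff, Fin.add_def]
          simp only [Fin.val_one']
          have h2 := (σ j).2
          have : ((σ j).1 - 1 + 1 % m) % m = (σ j).1 := by
            rcases Nat.eq_or_lt_of_le hm with h | h
            · exfalso; have := (σ j).2; omega
            · rw [Nat.mod_eq_of_lt h, Nat.mod_eq_of_lt (by omega)]; omega
          exact this
        simp only [hA, mem_filter, mem_univ, true_and]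
        rw [heq, Equiv.Perm.coe_inv, Equiv.symm_apply_apply]
        rw [Fin.lt_def]
        simp only []
        rw [Fin.le_def] at hle
        omega
      · have heq : (⟨(σ j).1 - 1, by have := (σ j).2; omega⟩ : Fin m) + 1 = σ j := by
          rw [Fin.ext_iff, Fin.add_def]
          simp only [Fin.val_one']
          have h2 := (σ j).2
          rcases Nat.eq_or_lt_of_le hm with h | h
          · exfalso; have := (σ j).2; omega
          · rw [Nat.mod_eq_of_lt h, Nat.mod_eq_of_lt (by omega)]; omega
        rw [heq, Equiv.Perm.coe_inv, Equiv.symm_apply_apply]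
  have hBC : B = Cs.erase (σ⁻¹ 0) := by
    ext j
    simp only [hB, hC, mem_filter, mem_univ, true_and, mem_erase]
    constructor
    · rintro ⟨h1, h2⟩
      refine ⟨?_, h1⟩
      intro h
      apply h2
      rw [h, Equiv.Perm.coe_inv, Equiv.apply_symm_apply]
    · rintro ⟨h1, h2⟩
      refine ⟨h2, ?_⟩
      intro h
      apply h1
      rw [← h, Equiv.Perm.coe_inv, Equiv.symm_apply_apply]
  have hmem : σ⁻¹ 0 ∈ Cs := by
    simp only [hC, mem_filter, mem_univ, true_and]
    rw [Equiv.Perm.coe_inv, Equiv.apply_symm_apply]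
    exact Fin.zero_le _
  have hcardC : exc σ + Cs.card = m := by
    have := Finset.card_filter_add_card_filter_not (s := (univ : Finset (Fin m)))
      (p := fun i => i < σ i)
    unfold exc
    rw [hC]
    have hneg : (univ.filter fun i : Fin m => ¬ i < σ i) = univ.filter (fun j => σ j ≤ j) := by
      simp [not_lt]
    rw [← hneg]
    simpa using this
  have hCpos : 1 ≤ Cs.card := Finset.card_pos.mpr ⟨_, hmem⟩ |>.le.trans (le_refl _) |> fun _ => Finset.card_pos.mpr ⟨_, hmem⟩
  have hBcard : B.card + 1 = Cs.card := by
    rw [hBC, Finset.card_erase_of_mem hmem]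
    omega
  omega

theorem alternating_sum_excedances_even_vanishes (n : ℕ) (hn : 1 ≤ n) :
    S (2 * n) = 0 := by
  haveI : NeZero (2 * n) := ⟨by omega⟩
  set m := 2 * n with hm
  let E : Equiv.Perm (Fin m) ≃ Equiv.Perm (Fin m) :=
    { toFun := fun σ => (Equiv.addRight (1 : Fin m)).trans (σ⁻¹ : Equiv.Perm (Fin m))
      invFun := fun τ => (((Equiv.addRight (1 : Fin m)).symm.trans τ : Equiv.Perm (Fin m)))⁻¹
      left_inv := by
        intro σ; ext i
        simp [Equiv.Perm.inv_def]
      right_inv := by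
        intro τ; ext i
        simp [Equiv.Perm.inv_def] }
  have hS : S m = ∑ σ : Equiv.Perm (Fin m), (-1 : ℤ) ^ exc (E σ) := (Equiv.sum_comp E _).symm
  have hflip : ∀ σ : Equiv.Perm (Fin m), (-1 : ℤ) ^ exc (E σ) = -(-1 : ℤ) ^ exc σ := by
    intro σ
    have hkey : exc (E σ) + exc σ + 1 = m := exc_key σ
    have hodd : Odd (exc (E σ) + exc σ) := ⟨n - 1, by omega⟩
    have h1 : (-1 : ℤ) ^ (exc (E σ) + exc σ) = -1 := Odd.neg_one_pow hodd
    have h2 : (-1 : ℤ) ^ exc (E σ) * (-1 : ℤ) ^ exc σ = -1 := by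
      rw [← pow_add]; exact h1
    have h3 : (-1 : ℤ) ^ exc σ * (-1 : ℤ) ^ exc σ = 1 := by
      rw [← pow_add]; exact Even.neg_one_pow ⟨_, rfl⟩
    calc (-1 : ℤ) ^ exc (E σ) = (-1 : ℤ) ^ exc (E σ) * ((-1 : ℤ) ^ exc σ * (-1 : ℤ) ^ exc σ) := by
          rw [h3, mul_one]
      _ = ((-1 : ℤ) ^ exc (E σ) * (-1 : ℤ) ^ exc σ) * (-1 : ℤ) ^ exc σ := by ring
      _ = -(-1 : ℤ) ^ exc σ := by rw [h2]; ring
  have hsum : ∑ σ : Equiv.Perm (Fin m), (-1 : ℤ) ^ exc (E σ)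
      = -∑ σ : Equiv.Perm (Fin m), (-1 : ℤ) ^ exc σ := by
    rw [← Finset.sum_neg_distrib]
    exact Finset.sum_congr rfl (fun σ _ => hflip σ)
  have hSdef : S m = ∑ σ : Equiv.Perm (Fin m), (-1 : ℤ) ^ exc σ := rfl
  have hneg : S m = -S m := by
    calc S m = ∑ σ : Equiv.Perm (Fin m), (-1 : ℤ) ^ exc (E σ) := hS
      _ = -∑ σ : Equiv.Perm (Fin m), (-1 : ℤ) ^ exc σ := hsum
      _ = -S m := by rw [hSdef]
  omega
end

section
/- For every integer n ≥ 1, among the (2n)! permutations of Fin (2n), the number of permutations with an even number of excedances equals the number of permutations with an odd number of excedances (each class has cardinality (2n)!/2). -/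
lemma exc_rotate_aux (m : ℕ) (σ : Equiv.Perm (Fin (m + 1))) :
    exc ((finRotate (m + 1)).trans σ.symm) + exc σ = m := by
  set c : Equiv.Perm (Fin (m + 1)) := finRotate (m + 1) with hc
  set τ : Equiv.Perm (Fin (m + 1)) := c.trans σ.symm with hτ
  have step1 : exc τ = (Finset.univ.filter fun j : Fin (m + 1) =>
      0 < σ j ∧ σ j ≤ j).card := by
    apply Finset.card_bij (fun i _ => τ i)
    · intro i hi
      simp only [Finset.mem_filter, Finset.mem_univ, true_and] at hi ⊢
      have hστ : σ (τ i) = i + 1 := by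
        simp [hτ, hc, Equiv.trans_apply, finRotate_succ_apply]
      have hlt : (i : ℕ) < m := by
        have h1 : (i : ℕ) < (τ i : ℕ) := hi
        have h2 : ((τ i : ℕ)) ≤ m := Nat.lt_succ_iff.mp (τ i).isLt
        omega
      have hval : ((i + 1 : Fin (m + 1)) : ℕ) = (i : ℕ) + 1 :=
        Fin.val_add_one_of_lt (by rwa [Fin.lt_def, Fin.val_last])
      constructor
      · rw [hστ, Fin.lt_def, hval]; simp
      · rw [hστ, Fin.le_def, hval]; exact hi
    · intro a _ b _ h; exact τ.injective h
    · intro j hj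
      simp only [Finset.mem_filter, Finset.mem_univ, true_and] at hj
      obtain ⟨h0, hle⟩ := hj
      refine ⟨τ.symm j, ?_, τ.apply_symm_apply j⟩
      simp only [Finset.mem_filter, Finset.mem_univ, true_and]
      rw [τ.apply_symm_apply]
      have hτs : τ.symm j = σ j - 1 := by
        rw [Equiv.symm_apply_eq]
        simp [hτ, hc, Equiv.trans_apply, finRotate_succ_apply, sub_add_cancel]
      rw [hτs, Fin.lt_def]
      have hne : σ j ≠ 0 := by
        intro h; rw [h] at h0; exact lt_irrefl _ h0
      have : ((σ j - 1 : Fin (m + 1)) : ℕ) = (σ j : ℕ) - 1 := by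
        rw [Fin.coe_sub_one, if_neg hne]
      rw [this]
      have h0' : 0 < (σ j : ℕ) := by rwa [Fin.lt_def] at h0
      have hle' : (σ j : ℕ) ≤ (j : ℕ) := hle
      omega
  have step2 : (Finset.univ.filter fun j : Fin (m + 1) => 0 < σ j ∧ σ j ≤ j).card + 1 =
      (Finset.univ.filter fun j : Fin (m + 1) => σ j ≤ j).card := by
    have hset : (Finset.univ.filter fun j : Fin (m + 1) => σ j ≤ j) =
        insert (σ.symm 0) (Finset.univ.filter fun j : Fin (m + 1) => 0 < σ j ∧ σ j ≤ j) := by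
      ext j
      simp only [Finset.mem_filter, Finset.mem_univ, true_and, Finset.mem_insert]
      constructor
      · intro h
        rcases eq_or_lt_of_le (Fin.zero_le (σ j)) with h0 | h0
        · left; rw [Equiv.eq_symm_apply]; exact h0.symm
        · right; exact ⟨h0, h⟩
      · rintro (h | ⟨_, h⟩)
        · subst h; rw [Equiv.apply_symm_apply]; exact Fin.zero_le _
        · exact h
    have hnotmem : σ.symm 0 ∉
        (Finset.univ.filter fun j : Fin (m + 1) => 0 < σ j ∧ σ j ≤ j) := by
      simp [Equiv.apply_symm_apply]
    rw [hset, Finset.card_insert_of_notMem hnotmem, Nat.add_comm]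
  have step3 : (Finset.univ.filter fun j : Fin (m + 1) => σ j ≤ j).card + exc σ = m + 1 := by
    have h := Finset.card_filter_add_card_filter_not
      (s := (Finset.univ : Finset (Fin (m + 1)))) (p := fun i => i < σ i)
    simp only [Finset.card_univ, Fintype.card_fin, not_lt] at h
    unfold exc
    omega
  unfold exc at *
  omega

theorem even_odd_excedance_counts_equal (n : ℕ) (hn : 1 ≤ n) :
    (Finset.univ.filter fun σ : Equiv.Perm (Fin (2 * n)) => Even (exc σ)).card =
      (Finset.univ.filter fun σ : Equiv.Perm (Fin (2 * n)) => Odd (exc σ)).card ∧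
    (Finset.univ.filter fun σ : Equiv.Perm (Fin (2 * n)) => Even (exc σ)).card =
      (2 * n).factorial / 2 := by
  obtain ⟨k, hk⟩ : ∃ k, 2 * n = k + 1 := ⟨2 * n - 1, by omega⟩
  have hkodd : Odd k := ⟨n - 1, by omega⟩
  have key : ∀ σ : Equiv.Perm (Fin (k + 1)),
      exc ((finRotate (k + 1)).trans σ.symm) + exc σ = k := exc_rotate_aux k
  rw [hk]
  have main : (Finset.univ.filter fun σ : Equiv.Perm (Fin (k + 1)) => Even (exc σ)).card =
      (Finset.univ.filter fun σ : Equiv.Perm (Fin (k + 1)) => Odd (exc σ)).card := by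
    refine Finset.card_bij' (fun σ _ => (finRotate (k + 1)).trans σ.symm)
      (fun τ _ => τ.symm.trans (finRotate (k + 1))) ?_ ?_ ?_ ?_
    · intro σ hσ
      simp only [Finset.mem_filter, Finset.mem_univ, true_and] at hσ ⊢
      have := key σ
      obtain ⟨j, hj⟩ := hσ
      obtain ⟨l, hl⟩ := hkodd
      exact ⟨l - j, by omega⟩
    · intro τ hτ
      simp only [Finset.mem_filter, Finset.mem_univ, true_and] at hτ ⊢
      have hFτ : (finRotate (k + 1)).trans (τ.symm.trans (finRotate (k + 1))).symm = τ := by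
        ext x
        simp only [Equiv.trans_apply, Equiv.symm_trans_apply, Equiv.symm_symm,
          Equiv.apply_symm_apply, Equiv.symm_apply_apply]
      have := key (τ.symm.trans (finRotate (k + 1)))
      rw [hFτ] at this
      obtain ⟨j, hj⟩ := hτ
      obtain ⟨l, hl⟩ := hkodd
      exact ⟨l - j, by omega⟩
    · intro σ _
      ext x
      simp only [Equiv.trans_apply, Equiv.symm_trans_apply, Equiv.symm_symm,
        Equiv.apply_symm_apply, Equiv.symm_apply_apply]
    · intro τ _
      ext x
      simp only [Equiv.trans_apply, Equiv.symm_trans_apply, Equiv.symm_symm,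
        Equiv.apply_symm_apply, Equiv.symm_apply_apply]
  refine ⟨main, ?_⟩
  have htotal : (Finset.univ.filter fun σ : Equiv.Perm (Fin (k + 1)) => Even (exc σ)).card +
      (Finset.univ.filter fun σ : Equiv.Perm (Fin (k + 1)) => Odd (exc σ)).card =
      (k + 1).factorial := by
    have h := Finset.card_filter_add_card_filter_not
      (s := (Finset.univ : Finset (Equiv.Perm (Fin (k + 1)))))
      (p := fun σ => Even (exc σ))
    simp only [Finset.card_univ, Nat.not_even_iff_odd] at h
    rwa [Fintype.card_perm, Fintype.card_fin] at h
  omega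
end

section
/- For every integer n ≥ 1, the alternating sum of excedances over permutations of odd length satisfies, as an identity of rational numbers, S_{2n-1} = (2^{2n}·(2^{2n} − 1)/(2n)) · B_{2n}, where B_{2n} is the (2n)-th Bernoulli number. -/
open Finset


/-- Number of surjections from an `n`-set onto a `k`-set. -/
def Sur : ℕ → ℕ → ℕ
  | 0, 0 => 1
  | 0, _+1 => 0
  | _+1, 0 => 0
  | n+1, k+1 => (k+1) * (Sur n (k+1) + Sur n k)

lemma Sur_zero_right (n : ℕ) : Sur (n+1) 0 = 0 := rfl

lemma Sur_of_lt : ∀ {n k : ℕ}, n < k → Sur n k = 0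
  | 0, _+1, _ => rfl
  | n+1, k+1, h => by
    show (k+1) * (Sur n (k+1) + Sur n k) = 0
    rw [Sur_of_lt (show n < k+1 by omega), Sur_of_lt (show n < k by omega)]
    simp

lemma sur_binom (m : ℕ) : ∀ k : ℕ,
    ∑ i ∈ range (m+1), m.choose i * Sur i k = Sur m k + Sur m (k+1) := by
  induction m with
  | zero =>
    intro k
    rw [Finset.sum_range_one]
    simp only [Nat.choose_self, one_mul]
    rw [Sur_of_lt (show 0 < k+1 by omega), add_zero]
  | succ m IH =>
    intro k
    have h2 : (∑ i ∈ range (m+1), m.choose (i+1) * Sur (i+1) k) + m.choose 0 * Sur 0 k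
        = Sur m k + Sur m (k+1) :=
      (Finset.sum_range_succ' (fun i => m.choose i * Sur i k) (m+1)).symm.trans (by
        rw [Finset.sum_range_succ, Nat.choose_succ_self, zero_mul, add_zero]
        exact IH k)
    rw [Finset.sum_range_succ']
    have hch : ∀ i ∈ range (m+1), (m+1).choose (i+1) * Sur (i+1) k
        = m.choose i * Sur (i+1) k + m.choose (i+1) * Sur (i+1) k := by
      intro i _; rw [Nat.choose_succ_succ, add_mul]
    rw [Finset.sum_congr rfl hch, Finset.sum_add_distrib]
    have hc0 : (m+1).choose 0 * Sur 0 k = m.choose 0 * Sur 0 k := by simp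
    rw [hc0, add_assoc, h2]
    cases k with
    | zero =>
      have hz : ∀ i ∈ range (m+1), m.choose i * Sur (i+1) 0 = 0 := fun i _ => by
        rw [Sur_zero_right, mul_zero]
      rw [Finset.sum_congr rfl hz, Finset.sum_const_zero, zero_add, Sur_zero_right]
      show Sur m 0 + Sur m (0+1) = 0 + 1 * (Sur m (0+1) + Sur m 0)
      omega
    | succ j =>
      have hz : ∀ i ∈ range (m+1), m.choose i * Sur (i+1) (j+1)
          = (j+1) * (m.choose i * Sur i (j+1) + m.choose i * Sur i j) := by
        intro i _
        show m.choose i * ((j+1) * (Sur i (j+1) + Sur i j)) = _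
        ring
      rw [Finset.sum_congr rfl hz, ← Finset.mul_sum, Finset.sum_add_distrib, IH (j+1), IH j]
      show _ = (j+1) * (Sur m (j+1) + Sur m j) + (j+2) * (Sur m (j+2) + Sur m (j+1))
      ring

noncomputable def eS (m : ℕ) : ℚ := ∑ k ∈ range (m+1), (Sur m k : ℚ) * (-1)^k / 2^(k+1)

lemma eS_zero : eS 0 = 1/2 := by
  rw [eS, Finset.sum_range_one]
  norm_num [show Sur 0 0 = 1 from rfl]

lemma eS_eq {i M : ℕ} (h : i ≤ M) :
    eS i = ∑ k ∈ range (M+1), (Sur i k : ℚ) * (-1)^k / 2^(k+1) := by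
  rw [eS]
  apply Finset.sum_subset (Finset.range_subset_range.2 (by omega))
  intro k _ hk
  rw [Sur_of_lt (show i < k by simp only [Finset.mem_range] at hk ⊢; omega)]
  simp

lemma eS_rec (m : ℕ) :
    (∑ i ∈ range (m+1), (m.choose i : ℚ) * eS i) + eS m = if m = 0 then 1 else 0 := by
  have h1 : ∑ i ∈ range (m+1), (m.choose i : ℚ) * eS i
      = ∑ k ∈ range (m+1), ((Sur m k : ℚ) + (Sur m (k+1) : ℚ)) * ((-1)^k / 2^(k+1)) := by
    calc ∑ i ∈ range (m+1), (m.choose i : ℚ) * eS i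
        = ∑ i ∈ range (m+1), ∑ k ∈ range (m+1),
            (m.choose i : ℚ) * ((Sur i k : ℚ) * (-1)^k / 2^(k+1)) := by
          refine Finset.sum_congr rfl fun i hi => ?_
          rw [eS_eq (show i ≤ m by simp only [Finset.mem_range] at hi; omega), Finset.mul_sum]
      _ = ∑ k ∈ range (m+1), ∑ i ∈ range (m+1),
            (m.choose i : ℚ) * ((Sur i k : ℚ) * (-1)^k / 2^(k+1)) := Finset.sum_comm
      _ = _ := by
          refine Finset.sum_congr rfl fun k _ => ?_
          have hc : ∑ i ∈ range (m+1), (m.choose i : ℚ) * (Sur i k : ℚ)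
              = (Sur m k : ℚ) + (Sur m (k+1) : ℚ) := by
            exact_mod_cast sur_binom m k
          rw [← hc, Finset.sum_mul]
          refine Finset.sum_congr rfl fun i _ => by ring
  rw [h1]
  have h2 : ∑ k ∈ range (m+1), ((Sur m k : ℚ) + (Sur m (k+1) : ℚ)) * ((-1)^k / 2^(k+1))
      = eS m + ∑ k ∈ range (m+1), (Sur m (k+1) : ℚ) * ((-1)^k / 2^(k+1)) := by
    rw [eS, ← Finset.sum_add_distrib]
    refine Finset.sum_congr rfl fun k _ => by ring
  rw [h2]
  rcases Nat.eq_zero_or_pos m with rfl | hm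
  · rw [eS_zero, Finset.sum_range_one]
    norm_num [show Sur 0 1 = 0 from rfl]
  · rw [if_neg (by omega)]
    obtain ⟨m', rfl⟩ : ∃ m', m = m'+1 := ⟨m-1, by omega⟩
    have hE : eS (m'+1) = ∑ k ∈ range (m'+1), (Sur (m'+1) (k+1) : ℚ) * ((-1)^(k+1) / 2^(k+2)) := by
      rw [eS, Finset.sum_range_succ', Sur_zero_right]
      push_cast
      rw [zero_mul, zero_div, add_zero]
      refine Finset.sum_congr rfl fun k _ => by ring
    have hT : ∑ k ∈ range (m'+1+1), (Sur (m'+1) (k+1) : ℚ) * ((-1)^k / 2^(k+1))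
        = -2 * eS (m'+1) := by
      rw [Finset.sum_range_succ, Sur_of_lt (by omega)]
      push_cast
      rw [zero_mul, add_zero, hE, Finset.mul_sum]
      refine Finset.sum_congr rfl fun k _ => ?_
      rw [pow_succ (-1:ℚ) k, pow_succ (2:ℚ) (k+1)]
      ring
    rw [hT]
    ring

open PowerSeries in
noncomputable def Eser : ℚ⟦X⟧ := PowerSeries.mk fun m => eS m / m.factorial

open PowerSeries in
noncomputable def Rser : ℚ⟦X⟧ :=
  PowerSeries.mk fun m => (2^(m+1) - 1) * bernoulli (m+1) / (m+1).factorial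

lemma Eser_mul : Eser * (PowerSeries.exp ℚ + 1) = 1 := by
  ext m
  rw [mul_add, mul_one, map_add, PowerSeries.coeff_mul,
    Finset.Nat.sum_antidiagonal_eq_sum_range_succ_mk]
  have hterm : ∀ k ∈ range (m+1),
      (PowerSeries.coeff k Eser) * (PowerSeries.coeff (m-k) (PowerSeries.exp ℚ))
      = (m.choose k : ℚ) * eS k / m.factorial := by
    intro k hk
    have hkm : k ≤ m := by simp only [Finset.mem_range] at hk; omega
    rw [PowerSeries.coeff_exp, Eser, PowerSeries.coeff_mk, Algebra.algebraMap_self_apply,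
      Nat.cast_choose ℚ hkm]
    have h1 : ((k.factorial : ℚ)) ≠ 0 := Nat.cast_ne_zero.2 k.factorial_ne_zero
    have h2 : (((m-k).factorial : ℚ)) ≠ 0 := Nat.cast_ne_zero.2 (m-k).factorial_ne_zero
    have h3 : ((m.factorial : ℚ)) ≠ 0 := Nat.cast_ne_zero.2 m.factorial_ne_zero
    field_simp
  rw [Finset.sum_congr rfl hterm, Eser, PowerSeries.coeff_mk, ← Finset.sum_div,
    ← add_div, eS_rec, PowerSeries.coeff_one]
  split_ifs with h
  · subst h; norm_num
  · norm_num

open PowerSeries in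
open PowerSeries in
lemma X_mul_Rser : (PowerSeries.X : ℚ⟦X⟧) * Rser
    = PowerSeries.rescale 2 (bernoulliPowerSeries ℚ) - bernoulliPowerSeries ℚ := by
  ext n
  rw [map_sub, PowerSeries.coeff_rescale]
  cases n with
  | zero =>
    rw [PowerSeries.coeff_zero_X_mul]
    simp [bernoulliPowerSeries, PowerSeries.coeff_mk]
  | succ k =>
    rw [PowerSeries.coeff_succ_X_mul, Rser, PowerSeries.coeff_mk]
    simp only [bernoulliPowerSeries, PowerSeries.coeff_mk, Algebra.algebraMap_self_apply]
    have h : (((k+1).factorial : ℚ)) ≠ 0 := Nat.cast_ne_zero.2 (k+1).factorial_ne_zero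
    field_simp

open PowerSeries in
lemma rescale_two_X : PowerSeries.rescale (2:ℚ) PowerSeries.X
    = PowerSeries.C (2:ℚ) * PowerSeries.X := by
  ext n
  rw [PowerSeries.coeff_rescale, PowerSeries.coeff_C_mul, PowerSeries.coeff_X]
  split_ifs with h
  · subst h; norm_num
  · simp

open PowerSeries in
lemma exp_sq : (PowerSeries.exp ℚ) ^ 2 = PowerSeries.rescale (2:ℚ) (PowerSeries.exp ℚ) := by
  rw [PowerSeries.exp_pow_eq_rescale_exp]
  norm_num

open PowerSeries in
lemma exp_sub_one_ne : (PowerSeries.exp ℚ) - 1 ≠ 0 := fun h => by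
  have h1 := congrArg (PowerSeries.coeff 1) h
  rw [map_sub, PowerSeries.coeff_exp, PowerSeries.coeff_one] at h1
  norm_num [Nat.factorial] at h1

open PowerSeries in
lemma exp_add_one_ne : (PowerSeries.exp ℚ) + 1 ≠ 0 := fun h => by
  have h1 := congrArg (PowerSeries.constantCoeff (R := ℚ)) h
  rw [map_add, PowerSeries.constantCoeff_exp, map_one] at h1
  norm_num at h1

open PowerSeries in
lemma Rser_mul : Rser * (PowerSeries.exp ℚ + 1) = -1 := by
  have key : (PowerSeries.X * (Rser * (PowerSeries.exp ℚ + 1))) * (PowerSeries.exp ℚ - 1)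
      = (PowerSeries.X * (-1)) * (PowerSeries.exp ℚ - 1) := by
    calc (PowerSeries.X * (Rser * (PowerSeries.exp ℚ + 1))) * (PowerSeries.exp ℚ - 1)
        = (PowerSeries.X * Rser) * ((PowerSeries.exp ℚ)^2 - 1) := by ring
      _ = (PowerSeries.rescale 2 (bernoulliPowerSeries ℚ) - bernoulliPowerSeries ℚ)
            * (PowerSeries.rescale 2 (PowerSeries.exp ℚ - 1)) := by
          rw [X_mul_Rser, exp_sq, map_sub, map_one]
      _ = PowerSeries.rescale 2 (bernoulliPowerSeries ℚ * (PowerSeries.exp ℚ - 1))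
            - bernoulliPowerSeries ℚ * ((PowerSeries.exp ℚ)^2 - 1) := by
          rw [map_mul, exp_sq, map_sub, map_one]; ring
      _ = PowerSeries.rescale 2 (bernoulliPowerSeries ℚ * (PowerSeries.exp ℚ - 1))
            - (bernoulliPowerSeries ℚ * (PowerSeries.exp ℚ - 1)) * (PowerSeries.exp ℚ + 1) := by
          ring
      _ = PowerSeries.C (2:ℚ) * PowerSeries.X - PowerSeries.X * (PowerSeries.exp ℚ + 1) := by
          rw [bernoulliPowerSeries_mul_exp_sub_one, rescale_two_X]
      _ = (PowerSeries.X * (-1)) * (PowerSeries.exp ℚ - 1) := by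
          rw [show PowerSeries.C (2:ℚ) = (2 : PowerSeries ℚ) from map_ofNat _ 2]; ring
  have h1 := mul_right_cancel₀ exp_sub_one_ne key
  exact mul_left_cancel₀ PowerSeries.X_ne_zero h1

open PowerSeries in
lemma eS_eq_bernoulli (m : ℕ) :
    eS m = -((2^(m+1) - 1) * bernoulli (m+1) / (m+1)) := by
  have h : Eser = -Rser := by
    have h1 : (Eser + Rser) * (PowerSeries.exp ℚ + 1) = 0 := by
      rw [add_mul, Eser_mul, Rser_mul]; ring
    rcases mul_eq_zero.1 h1 with h | h
    · exact eq_neg_of_add_eq_zero_left h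
    · exact absurd h exp_add_one_ne
  have h2 := congrArg (PowerSeries.coeff m) h
  rw [Eser, PowerSeries.coeff_mk, map_neg, Rser, PowerSeries.coeff_mk] at h2
  have hm : ((m.factorial : ℚ)) ≠ 0 := Nat.cast_ne_zero.2 m.factorial_ne_zero
  have hm1 : ((m:ℚ) + 1) ≠ 0 := by positivity
  rw [Nat.factorial_succ] at h2
  push_cast at h2
  field_simp at h2
  have h4 : eS m * ((m:ℚ)+1) = -((2^(m+1)-1) * bernoulli (m+1)) :=
    by linear_combination h2
  rw [← neg_div, eq_div_iff hm1]
  linear_combination h4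

lemma exc_eq_sum {n : ℕ} (σ : Equiv.Perm (Fin n)) :
    exc σ = ∑ i : Fin n, if i < σ i then 1 else 0 :=
  Finset.card_filter _ _

lemma exc_le {n : ℕ} (σ : Equiv.Perm (Fin n)) : exc σ ≤ n := by
  rw [exc]
  exact (Finset.card_filter_le _ _).trans (by simp)

lemma exc_eq_sum_inv {n : ℕ} (σ : Equiv.Perm (Fin n)) :
    exc σ = ∑ x : Fin n, if σ⁻¹ x < x then 1 else 0 := by
  rw [exc_eq_sum]
  rw [← Equiv.sum_comp σ (fun x => if σ⁻¹ x < x then (1:ℕ) else 0)]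
  refine Finset.sum_congr rfl fun i _ => ?_
  rw [Equiv.Perm.inv_def, Equiv.symm_apply_apply]

lemma exc_decomposeFin_zero {n : ℕ} (σ : Equiv.Perm (Fin n)) :
    exc (Equiv.Perm.decomposeFin.symm (0, σ)) = exc σ := by
  rw [exc_eq_sum, exc_eq_sum, Fin.sum_univ_succ, Equiv.Perm.decomposeFin_symm_apply_zero]
  simp only [lt_irrefl, if_false, zero_add]
  refine Finset.sum_congr rfl fun i _ => ?_
  rw [Equiv.Perm.decomposeFin_symm_apply_succ]
  simp [Equiv.swap_self, Fin.succ_lt_succ_iff]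

lemma exc_decomposeFin_succ {n : ℕ} (σ : Equiv.Perm (Fin n)) (j : Fin n) :
    exc (Equiv.Perm.decomposeFin.symm (j.succ, σ))
      = if σ⁻¹ j < j then exc σ else exc σ + 1 := by
  rw [exc_eq_sum, Fin.sum_univ_succ, Equiv.Perm.decomposeFin_symm_apply_zero,
    if_pos (Fin.succ_pos j)]
  have hterm : ∀ i : Fin n,
      (if (i.succ : Fin (n+1)) < Equiv.Perm.decomposeFin.symm (j.succ, σ) i.succ
        then (1:ℕ) else 0)
      = (fun x => if x = j then 0 else if σ⁻¹ x < x then (1:ℕ) else 0) (σ i) := by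
    intro i
    rw [Equiv.Perm.decomposeFin_symm_apply_succ]
    by_cases hij : σ i = j
    · rw [hij, Equiv.swap_apply_right]
      simp
    · rw [Equiv.swap_apply_of_ne_of_ne (Fin.succ_ne_zero _)
        (fun hc => hij (Fin.succ_injective _ hc))]
      simp only [Fin.succ_lt_succ_iff, hij, if_false, Equiv.Perm.inv_def, Equiv.symm_apply_apply]
  rw [Finset.sum_congr rfl fun i _ => hterm i]
  rw [Equiv.sum_comp σ (fun x => if x = j then 0 else if σ⁻¹ x < x then (1:ℕ) else 0)]
  have hsplit : ∑ x : Fin n, (if x = j then 0 else if σ⁻¹ x < x then (1:ℕ) else 0)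
      = ∑ x ∈ Finset.univ.erase j, (if σ⁻¹ x < x then (1:ℕ) else 0) := by
    rw [← Finset.sum_erase (Finset.univ : Finset (Fin n))
      (show (if j = j then 0 else if σ⁻¹ j < j then (1:ℕ) else 0) = 0 by simp)]
    exact Finset.sum_congr rfl fun x hx => if_neg (Finset.ne_of_mem_erase hx)
  rw [hsplit]
  have h1 : exc σ = ∑ x ∈ Finset.univ.erase j, (if σ⁻¹ x < x then (1:ℕ) else 0)
      + (if σ⁻¹ j < j then (1:ℕ) else 0) := by
    rw [exc_eq_sum_inv, ← Finset.sum_erase_add _ _ (Finset.mem_univ j)]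
  split_ifs with h <;> simp only [h, if_pos, if_neg, if_true, if_false] at h1 <;> omega

lemma sum_g_exc {M : Type*} [AddCommMonoid M] (n : ℕ) (g : ℕ → M) :
    ∑ τ : Equiv.Perm (Fin (n+1)), g (exc τ)
      = ∑ σ : Equiv.Perm (Fin n),
          ((1 + exc σ) • g (exc σ) + (n - exc σ) • g (exc σ + 1)) := by
  rw [← Equiv.sum_comp (Equiv.Perm.decomposeFin.symm)
    (fun τ : Equiv.Perm (Fin (n+1)) => g (exc τ))]
  rw [Fintype.sum_prod_type, Finset.sum_comm]
  refine Finset.sum_congr rfl fun σ _ => ?_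
  rw [Fin.sum_univ_succ, exc_decomposeFin_zero]
  have h1 : ∀ j : Fin n, g (exc (Equiv.Perm.decomposeFin.symm (j.succ, σ)))
      = (fun x => if σ⁻¹ x < x then g (exc σ) else g (exc σ + 1)) j := by
    intro j
    rw [exc_decomposeFin_succ, apply_ite g]
  rw [Finset.sum_congr rfl fun j _ => h1 j]
  rw [← Equiv.sum_comp σ (fun x => if σ⁻¹ x < x then g (exc σ) else g (exc σ + 1))]
  have h2 : ∀ i : Fin n, (if σ⁻¹ (σ i) < σ i then g (exc σ) else g (exc σ + 1))
      = if i < σ i then g (exc σ) else g (exc σ + 1) := by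
    intro i; rw [Equiv.Perm.inv_def, Equiv.symm_apply_apply]
  rw [Finset.sum_congr rfl fun i _ => h2 i]
  rw [Finset.sum_ite, Finset.sum_const, Finset.sum_const]
  have h3 : (Finset.univ.filter fun i : Fin n => i < σ i).card = exc σ := rfl
  have h4 : (Finset.univ.filter fun i : Fin n => ¬ i < σ i).card = n - exc σ := by
    have h5 := Finset.card_filter_add_card_filter_not
      (s := (Finset.univ : Finset (Fin n))) (p := fun i : Fin n => i < σ i)
    rw [Finset.card_univ, Fintype.card_fin, h3] at h5
    omega
  rw [h3, h4, add_smul, one_smul, add_assoc]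

noncomputable def Q (n : ℕ) : Polynomial ℚ :=
  ∑ σ : Equiv.Perm (Fin n), Polynomial.X ^ exc σ

noncomputable def Psur (n : ℕ) : Polynomial ℚ :=
  ∑ k ∈ range (n+1), Polynomial.C (Sur n k : ℚ) * (Polynomial.X - 1) ^ (n - k)

lemma Q_succ (n : ℕ) : Q (n+1) = Q n + Polynomial.C (n:ℚ) * Polynomial.X * Q n
    + (Polynomial.X - Polynomial.X^2) * Polynomial.derivative (Q n) := by
  rw [show Q (n+1) = ∑ τ : Equiv.Perm (Fin (n+1)),
      (fun t => (Polynomial.X : Polynomial ℚ) ^ t) (exc τ) from rfl]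
  rw [sum_g_exc n (fun t => (Polynomial.X : Polynomial ℚ) ^ t), Q, Polynomial.derivative_sum]
  rw [Finset.mul_sum, Finset.mul_sum, ← Finset.sum_add_distrib, ← Finset.sum_add_distrib]
  refine Finset.sum_congr rfl fun σ _ => ?_
  have he := exc_le σ
  rw [Polynomial.derivative_X_pow]
  simp only [nsmul_eq_mul]
  push_cast [Nat.cast_sub he]
  cases hE : exc σ with
  | zero => simp
  | succ e =>
    have h1 : e + 1 - 1 = e := by omega
    rw [h1, pow_succ, pow_succ]
    push_cast
    simp only [Polynomial.C_add, Polynomial.C_mul, Polynomial.C_1, Polynomial.C_eq_natCast]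
    ring

lemma pow_iden (k d : ℕ) :
    (Polynomial.X - 1)^d + Polynomial.C (((k+d : ℕ)):ℚ) * Polynomial.X * (Polynomial.X - 1)^d
      + (Polynomial.X - Polynomial.X^2)
        * (Polynomial.C ((d : ℕ):ℚ) * (Polynomial.X - 1)^(d-1))
    = Polynomial.C ((k:ℚ)+1) * (Polynomial.X - 1)^d
      + Polynomial.C (k:ℚ) * (Polynomial.X - 1)^(d+1) := by
  cases d with
  | zero => push_cast; simp; ring
  | succ d' =>
    have h1 : d' + 1 - 1 = d' := by omega
    rw [h1, pow_succ, pow_succ]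
    push_cast
    simp only [Polynomial.C_add, Polynomial.C_mul, Polynomial.C_1, Polynomial.C_eq_natCast]
    ring

lemma Psur_succ (n : ℕ) : Psur (n+1) = Psur n + Polynomial.C (n:ℚ) * Polynomial.X * Psur n
    + (Polynomial.X - Polynomial.X^2) * Polynomial.derivative (Psur n) := by
  have hder : Polynomial.derivative (Psur n)
      = ∑ k ∈ range (n+1), Polynomial.C (Sur n k : ℚ)
          * (Polynomial.C (((n-k : ℕ)):ℚ) * (Polynomial.X - 1)^(n-k-1)) := by
    rw [Psur, Polynomial.derivative_sum]
    refine Finset.sum_congr rfl fun k _ => ?_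
    rw [Polynomial.derivative_C_mul, Polynomial.derivative_pow, Polynomial.derivative_sub,
      Polynomial.derivative_X, Polynomial.derivative_one, sub_zero, mul_one]
  rw [hder, Psur, Psur]
  rw [Finset.mul_sum, Finset.mul_sum, ← Finset.sum_add_distrib, ← Finset.sum_add_distrib]
  have hRHS : ∀ k ∈ range (n+1),
      Polynomial.C (Sur n k : ℚ) * (Polynomial.X - 1) ^ (n - k)
        + Polynomial.C (n:ℚ) * Polynomial.X
            * (Polynomial.C (Sur n k : ℚ) * (Polynomial.X - 1) ^ (n - k))
        + (Polynomial.X - Polynomial.X^2)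
            * (Polynomial.C (Sur n k : ℚ)
              * (Polynomial.C (((n-k : ℕ)):ℚ) * (Polynomial.X - 1)^(n-k-1)))
      = Polynomial.C (((k+1) * Sur n k : ℕ) : ℚ) * (Polynomial.X - 1) ^ (n - k)
        + Polynomial.C ((k * Sur n k : ℕ) : ℚ) * (Polynomial.X - 1) ^ (n + 1 - k) := by
    intro k hk
    have hkn : k ≤ n := by simp only [Finset.mem_range] at hk; omega
    have hd : k + (n - k) = n := by omega
    have hd2 : n - k + 1 = n + 1 - k := by omega
    have := pow_iden k (n - k)
    rw [hd] at this
    calc _ = Polynomial.C (Sur n k : ℚ)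
            * ((Polynomial.X - 1)^(n-k)
              + Polynomial.C ((n : ℕ):ℚ) * Polynomial.X * (Polynomial.X - 1)^(n-k)
              + (Polynomial.X - Polynomial.X^2)
                * (Polynomial.C (((n-k : ℕ)):ℚ) * (Polynomial.X - 1)^(n-k-1))) := by ring
      _ = Polynomial.C (Sur n k : ℚ)
            * (Polynomial.C ((k:ℚ)+1) * (Polynomial.X - 1) ^ (n - k)
              + Polynomial.C (k:ℚ) * (Polynomial.X - 1) ^ (n - k + 1)) := by rw [this]
      _ = _ := by
          rw [hd2]
          push_cast
          simp only [Polynomial.C_add, Polynomial.C_mul, Polynomial.C_1, Polynomial.C_eq_natCast]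
          ring
  rw [Finset.sum_congr rfl hRHS, Finset.sum_add_distrib]
  have hA : ∑ k ∈ range (n+1),
      Polynomial.C ((k * Sur n k : ℕ) : ℚ) * (Polynomial.X - 1) ^ (n + 1 - k)
      = ∑ k ∈ range n,
        Polynomial.C (((k+1) * Sur n (k+1) : ℕ) : ℚ) * (Polynomial.X - 1) ^ (n - k) := by
    rw [Finset.sum_range_succ']
    simp only [Nat.zero_mul, Nat.cast_zero, Polynomial.C_0, zero_mul, add_zero]
    refine Finset.sum_congr rfl fun k _ => ?_
    rw [show n + 1 - (k+1) = n - k by omega]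
  have hB : Psur (n+1) = (∑ k ∈ range n,
        Polynomial.C (((k+1) * Sur n (k+1) : ℕ) : ℚ) * (Polynomial.X - 1) ^ (n - k))
      + ∑ k ∈ range (n+1),
        Polynomial.C (((k+1) * Sur n k : ℕ) : ℚ) * (Polynomial.X - 1) ^ (n - k) := by
    rw [Psur, Finset.sum_range_succ']
    rw [show Polynomial.C ((Sur (n+1) 0 : ℕ) : ℚ) * (Polynomial.X - 1) ^ (n + 1 - 0) = 0 by
      rw [Sur_zero_right]; simp]
    rw [add_zero]
    have hstep : ∀ k ∈ range (n+1),
        Polynomial.C ((Sur (n+1) (k+1) : ℕ) : ℚ) * (Polynomial.X - 1) ^ (n + 1 - (k+1))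
        = Polynomial.C (((k+1) * Sur n (k+1) : ℕ) : ℚ) * (Polynomial.X - 1) ^ (n - k)
          + Polynomial.C (((k+1) * Sur n k : ℕ) : ℚ) * (Polynomial.X - 1) ^ (n - k) := by
      intro k _
      have : Sur (n+1) (k+1) = (k+1) * (Sur n (k+1) + Sur n k) := rfl
      rw [this, show n + 1 - (k+1) = n - k by omega]
      push_cast
      simp only [Polynomial.C_add, Polynomial.C_mul, Polynomial.C_1, Polynomial.C_eq_natCast]
      ring
    rw [Finset.sum_congr rfl hstep, Finset.sum_add_distrib]
    congr 1
    rw [Finset.sum_range_succ, Sur_of_lt (show n < n + 1 by omega)]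
    simp
  rw [hA]
  have hfold : (∑ k ∈ range (n+1+1),
      Polynomial.C ((Sur (n+1) k : ℕ) : ℚ) * (Polynomial.X - 1) ^ (n+1-k)) = Psur (n+1) := rfl
  rw [hfold, hB]
  ring

lemma Q_eq_Psur : ∀ n, Q n = Psur n := by
  intro n
  induction n with
  | zero =>
    have h0 : ∀ σ : Equiv.Perm (Fin 0), exc σ = 0 := fun σ => by
      rw [exc]
      simp [Finset.filter_eq_empty_iff]
    rw [Q, Psur, Finset.sum_congr rfl fun σ _ => by rw [h0 σ, pow_zero],
      Finset.sum_const, Finset.card_univ, Fintype.card_perm]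
    simp [show Sur 0 0 = 1 from rfl, Nat.factorial]
  | succ n IH => rw [Q_succ, Psur_succ, IH]

lemma S_eq_sum (m : ℕ) : (S m : ℚ) = ∑ k ∈ range (m+1), (Sur m k : ℚ) * (-2)^(m-k) := by
  have h1 : (S m : ℚ) = Polynomial.eval (-1 : ℚ) (Q m) := by
    rw [S, Q, Polynomial.eval_finset_sum]
    push_cast
    refine Finset.sum_congr rfl fun σ _ => ?_
    rw [Polynomial.eval_pow, Polynomial.eval_X]
  rw [h1, Q_eq_Psur, Psur, Polynomial.eval_finset_sum]
  refine Finset.sum_congr rfl fun k _ => ?_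
  rw [Polynomial.eval_mul, Polynomial.eval_pow, Polynomial.eval_sub, Polynomial.eval_X,
    Polynomial.eval_one, Polynomial.eval_C]
  norm_num

lemma S_odd (m : ℕ) (h : m % 2 = 1) :
    (S m : ℚ) = 2^(m+1) * ((2^(m+1) - 1) * bernoulli (m+1) / ((m+1 : ℕ) : ℚ)) := by
  rw [S_eq_sum]
  have hsum : ∀ k ∈ range (m+1), (Sur m k : ℚ) * (-2)^(m-k)
      = -(2^(m+1)) * ((Sur m k : ℚ) * (-1)^k / 2^(k+1)) := by
    intro k hk
    have hkm : k ≤ m := by simp only [Finset.mem_range] at hk; omega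
    have h2ne : ((2:ℚ))^(k+1) ≠ 0 := pow_ne_zero _ two_ne_zero
    have h2 : (2:ℚ)^(k+1) * 2^(m-k) = 2^(m+1) := by
      rw [← pow_add]; congr 1; omega
    have h3 : ((-1:ℚ))^(m-k) * (-1)^k = -1 := by
      rw [← pow_add, show m - k + k = m by omega]
      exact Odd.neg_one_pow ⟨m/2, by omega⟩
    have hsq : ((-1:ℚ))^k * (-1)^k = 1 := by
      rw [← pow_add]
      exact Even.neg_one_pow ⟨k, rfl⟩
    have h4 : ((-2:ℚ))^(m-k) = (-1)^(m-k) * 2^(m-k) := by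
      rw [← neg_one_mul, mul_pow]
    have h5 : ((-1:ℚ))^(m-k) = -(-1)^k := by
      linear_combination (-1:ℚ)^k * h3 - ((-1:ℚ))^(m-k) * hsq
    have h6 : (2:ℚ)^(m-k) = 2^(m+1) / 2^(k+1) := by
      rw [eq_div_iff h2ne]; linear_combination h2
    rw [h4, h5, h6]
    ring
  rw [Finset.sum_congr rfl hsum, ← Finset.mul_sum]
  have hfold : eS m = ∑ k ∈ range (m+1), (Sur m k : ℚ) * (-1)^k / 2^(k+1) := rfl
  rw [← hfold, eS_eq_bernoulli]
  push_cast
  ring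

theorem alternating_sum_excedances_eq_bernoulli (n : ℕ) (hn : 1 ≤ n) :
    (S (2 * n - 1) : ℚ) =
      (2 ^ (2 * n) * (2 ^ (2 * n) - 1) / (2 * n)) * bernoulli (2 * n) := by
  have h := S_odd (2*n - 1) (by omega)
  rw [show 2*n - 1 + 1 = 2*n by omega] at h
  rw [h]
  push_cast
  ring
end

section
/- For every integer n ≥ 2, the integer S_{2n-1} = ∑_{σ ∈ Perm(Fin (2n−1))} (-1)^{exc(σ)} is divisible by 2. -/
theorem two_dvd_alternating_sum_excedances (n : ℕ) (hn : 2 ≤ n) :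
    (2 : ℤ) ∣ S (2 * n - 1) := by
  have h1 : S (2 * n - 1) % 2 = (∑ _σ : Equiv.Perm (Fin (2 * n - 1)), (1 : ℤ)) % 2 := by
    unfold S
    rw [Finset.sum_int_mod, Finset.sum_int_mod (f := fun _ => (1 : ℤ))]
    congr 1
    apply Finset.sum_congr rfl
    intro σ _
    rcases Nat.even_or_odd (exc σ) with h | h
    · rw [h.neg_one_pow]
    · rw [h.neg_one_pow]; decide
  have h2 : (∑ _σ : Equiv.Perm (Fin (2 * n - 1)), (1 : ℤ)) =
      ((2 * n - 1).factorial : ℤ) := by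
    simp [Finset.card_univ, Fintype.card_perm,
      Fintype.card_fin]
  have h3 : (2 : ℕ) ∣ (2 * n - 1).factorial :=
    Nat.dvd_factorial (by norm_num) (by omega)
  rw [Int.dvd_iff_emod_eq_zero, h1, h2]
  exact_mod_cast Nat.mod_eq_zero_of_dvd h3
end

section
/- For every integer n ≥ 1, the sign of the alternating sum of excedances over permutations of odd length alternates: (−1)^{n−1} · S_{2n−1} > 0. -/
open Finset

def per {n : ℕ} (M : Fin n → Fin n → ℤ) : ℤ :=
  ∑ σ : Equiv.Perm (Fin n), ∏ i, M i (σ i)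

def Mk (m k : ℕ) : Fin m → Fin m → ℤ :=
  fun i j => if (j : ℕ) ≤ (i : ℕ) + (if (i : ℕ) < k then 0 else 1) then 1 else -1

def f (m k : ℕ) : ℤ := per (Mk m k)

lemma val_succAbove {n : ℕ} (p : Fin (n + 1)) (i : Fin n) :
    ((p.succAbove i : Fin (n + 1)) : ℕ) = if (i : ℕ) < (p : ℕ) then (i : ℕ) else (i : ℕ) + 1 := by
  rcases lt_or_ge ((i : ℕ)) ((p : ℕ)) with h | h
  · rw [if_pos h, Fin.succAbove_of_castSucc_lt _ _ (by rwa [Fin.lt_def])]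
    rfl
  · rw [if_neg (not_lt.mpr h), Fin.succAbove_of_le_castSucc _ _ (by rwa [Fin.le_def])]
    rfl

lemma f_one (k : ℕ) : f 1 k = 1 := by
  unfold f per
  have h : ∀ σ : Equiv.Perm (Fin 1), (∏ i, Mk 1 k i (σ i)) = 1 := by
    intro σ
    rw [Fin.prod_univ_one]
    have : σ 0 = 0 := Subsingleton.elim _ _
    rw [this]
    simp [Mk]
  rw [Finset.sum_congr rfl fun σ _ => h σ]
  simp [Fintype.card_perm]

lemma Mk_entry_eq {m k : ℕ} (i j : Fin (m + 1)) (h : ¬((i : ℕ) = k ∧ (j : ℕ) = k + 1)) :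
    Mk (m + 1) k i j = Mk (m + 1) (k + 1) i j := by
  unfold Mk
  split_ifs <;> omega

lemma minor1 {m k : ℕ} (hk : k < m) :
    (fun (i j : Fin m) => Mk (m + 1) k ((⟨k, by omega⟩ : Fin (m + 1)).succAbove i)
      ((⟨k + 1, by omega⟩ : Fin (m + 1)).succAbove j)) = Mk m k := by
  funext i j
  have hi := i.isLt
  have hj := j.isLt
  simp only [Mk, val_succAbove]
  split_ifs <;> omega

lemma minor2 {m : ℕ} (a : Fin (m + 1)) :
    (fun (i j : Fin m) => Mk (m + 1) 0 (a.succAbove i)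
      ((0 : Fin (m + 1)).succAbove j)) = Mk m (a : ℕ) := by
  funext i j
  have hi := i.isLt
  have hj := j.isLt
  have ha := a.isLt
  simp only [Mk, val_succAbove, Fin.val_zero, Nat.not_lt_zero, if_false]
  split_ifs <;> omega
/-- The permutation of `Fin (n+1)` sending `a ↦ b` and `a.succAbove j ↦ b.succAbove (τ j)`. -/
def ext1 {n : ℕ} (a b : Fin (n + 1)) (τ : Equiv.Perm (Fin n)) : Equiv.Perm (Fin (n + 1)) :=
  ((finSuccEquiv' a).trans τ.optionCongr).trans (finSuccEquiv' b).symm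

lemma ext1_apply_self {n : ℕ} (a b : Fin (n + 1)) (τ : Equiv.Perm (Fin n)) :
    ext1 a b τ a = b := by
  simp [ext1, finSuccEquiv'_at]

lemma ext1_apply_succAbove {n : ℕ} (a b : Fin (n + 1)) (τ : Equiv.Perm (Fin n)) (j : Fin n) :
    ext1 a b τ (a.succAbove j) = b.succAbove (τ j) := by
  simp [ext1, finSuccEquiv'_succAbove, finSuccEquiv'_symm_some]

/-- inverse construction -/
def restr1 {n : ℕ} (a b : Fin (n + 1)) (σ : Equiv.Perm (Fin (n + 1))) : Equiv.Perm (Fin n) :=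
  Equiv.removeNone (((finSuccEquiv' a).symm.trans σ).trans (finSuccEquiv' b))

lemma restr1_ext1 {n : ℕ} (a b : Fin (n + 1)) (τ : Equiv.Perm (Fin n)) :
    restr1 a b (ext1 a b τ) = τ := by
  have h : (((finSuccEquiv' a).symm.trans (ext1 a b τ)).trans (finSuccEquiv' b))
      = τ.optionCongr := by
    apply Equiv.ext
    intro x
    rcases x with _ | j
    · simp [finSuccEquiv'_symm_none, ext1_apply_self, finSuccEquiv'_at]
    · simp [finSuccEquiv'_symm_some, ext1_apply_succAbove, finSuccEquiv'_succAbove]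
  rw [restr1, h, Equiv.removeNone_optionCongr]

lemma ext1_restr1 {n : ℕ} (a b : Fin (n + 1)) (σ : Equiv.Perm (Fin (n + 1)))
    (hσ : σ a = b) : ext1 a b (restr1 a b σ) = σ := by
  apply Equiv.ext
  intro x
  rcases eq_or_ne x a with rfl | hx
  · rw [ext1_apply_self, hσ]
  · obtain ⟨j, rfl⟩ := Fin.exists_succAbove_eq hx
    rw [ext1_apply_succAbove]
    have hne : σ (a.succAbove j) ≠ b := by
      rw [← hσ]
      exact fun h => (Fin.succAbove_ne a j) (σ.injective h)
    obtain ⟨w, hw⟩ := Fin.exists_succAbove_eq hne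
    have hu : (((finSuccEquiv' a).symm.trans σ).trans (finSuccEquiv' b)) (some j) = some w := by
      simp [finSuccEquiv'_symm_some, ← hw, finSuccEquiv'_succAbove]
    have := Equiv.removeNone_some (((finSuccEquiv' a).symm.trans σ).trans (finSuccEquiv' b))
      ⟨w, hu⟩
    rw [hu] at this
    rw [restr1]
    rw [Option.some_inj.mp this, hw]

lemma per_cond {n : ℕ} (M : Fin (n + 1) → Fin (n + 1) → ℤ) (a b : Fin (n + 1)) :
    ∑ σ ∈ Finset.univ.filter (fun σ : Equiv.Perm (Fin (n + 1)) => σ a = b), ∏ i, M i (σ i)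
      = M a b * per (fun i j => M (a.succAbove i) (b.succAbove j)) := by
  rw [per, Finset.mul_sum]
  symm
  refine Finset.sum_bij' (fun τ _ => ext1 a b τ) (fun σ _ => restr1 a b σ) ?_ ?_ ?_ ?_ ?_
  · intro τ _
    simp [ext1_apply_self]
  · intro σ hσ
    simp
  · intro τ _
    exact restr1_ext1 a b τ
  · intro σ hσ
    exact ext1_restr1 a b σ (by simpa using hσ)
  · intro τ _
    rw [Fin.prod_univ_succAbove (fun i => M i (ext1 a b τ i)) a, ext1_apply_self]
    congr 1
    exact Finset.prod_congr rfl fun j _ => by rw [ext1_apply_succAbove]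


lemma F3 (m : ℕ) : f (m + 1) m = f (m + 1) (m + 1) := by
  unfold f
  congr 1
  funext i j
  have hi := i.isLt
  have hj := j.isLt
  simp only [Mk]
  split_ifs <;> omega

lemma Mk_one_entry (m : ℕ) (a : Fin (m + 1)) : Mk (m + 1) 0 a 0 = 1 := by
  simp only [Mk, Fin.val_zero]
  simp

lemma F2 (m : ℕ) : f (m + 1) 0 = ∑ j ∈ Finset.range (m + 1), f m j := by
  have h1 : f (m + 1) 0 = ∑ a : Fin (m + 1), f m (a : ℕ) := by
    unfold f per
    have step : ∀ σ : Equiv.Perm (Fin (m + 1)), (∏ i, Mk (m + 1) 0 i (σ i)) =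
        ∑ a : Fin (m + 1), (if σ a = (0 : Fin (m + 1)) then ∏ i, Mk (m + 1) 0 i (σ i) else 0) := by
      intro σ
      have he : ∀ a : Fin (m + 1), (σ a = (0 : Fin (m + 1))) ↔ a = σ.symm 0 := by
        intro a
        constructor
        · intro h; rw [← h, Equiv.symm_apply_apply]
        · intro h; rw [h, Equiv.apply_symm_apply]
      rw [Finset.sum_congr rfl fun a _ => by rw [if_congr (he a) rfl rfl]]
      rw [Finset.sum_ite_eq' Finset.univ (σ.symm 0)
        (fun _ => ∏ i, Mk (m + 1) 0 i (σ i))]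
      simp
    rw [Finset.sum_congr rfl fun σ _ => step σ, Finset.sum_comm]
    refine Finset.sum_congr rfl fun a _ => ?_
    have hpc := per_cond (Mk (m + 1) 0) a 0
    rw [minor2 a, Finset.sum_filter, Mk_one_entry, one_mul] at hpc
    exact hpc
  rw [h1, Fin.sum_univ_eq_sum_range (fun j => f m j) (m + 1)]

lemma F1 {m : ℕ} (k : ℕ) (hk : k < m) :
    f (m + 1) (k + 1) = f (m + 1) k - 2 * f m k := by
  have hk1 : k < m + 1 := by omega
  have hk2 : k + 1 < m + 1 := by omega
  set a : Fin (m + 1) := ⟨k, hk1⟩ with ha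
  set b : Fin (m + 1) := ⟨k + 1, hk2⟩ with hb
  have hab1 : Mk (m + 1) k a b = 1 := by
    simp only [Mk, ha, hb, Fin.val_mk]
    split_ifs <;> omega
  have hab2 : Mk (m + 1) (k + 1) a b = -1 := by
    simp only [Mk, ha, hb, Fin.val_mk]
    split_ifs <;> omega
  have hminor : (fun (i j : Fin m) => Mk (m + 1) k (a.succAbove i) (b.succAbove j))
      = Mk m k := by
    funext i j
    have hi := i.isLt
    have hj := j.isLt
    simp only [Mk, ha, hb, val_succAbove, Fin.val_mk]
    split_ifs <;> omega
  have key : f (m + 1) k - f (m + 1) (k + 1) = 2 * f m k := by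
    unfold f per
    rw [← Finset.sum_sub_distrib]
    have step : ∀ σ : Equiv.Perm (Fin (m + 1)),
        (∏ i, Mk (m + 1) k i (σ i)) - (∏ i, Mk (m + 1) (k + 1) i (σ i)) =
        2 * (if σ a = b then ∏ i, Mk (m + 1) k i (σ i) else 0) := by
      intro σ
      by_cases h : σ a = b
      · rw [if_pos h]
        have h1 : (∏ i, Mk (m + 1) k i (σ i)) =
            Mk (m + 1) k a b * ∏ j : Fin m, Mk (m + 1) k (a.succAbove j) (σ (a.succAbove j)) := by
          rw [Fin.prod_univ_succAbove (fun i => Mk (m + 1) k i (σ i)) a, h]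
        have h2 : (∏ i, Mk (m + 1) (k + 1) i (σ i)) =
            Mk (m + 1) (k + 1) a b *
              ∏ j : Fin m, Mk (m + 1) (k + 1) (a.succAbove j) (σ (a.succAbove j)) := by
          rw [Fin.prod_univ_succAbove (fun i => Mk (m + 1) (k + 1) i (σ i)) a, h]
        have hoff : ∀ j : Fin m, Mk (m + 1) (k + 1) (a.succAbove j) (σ (a.succAbove j)) =
            Mk (m + 1) k (a.succAbove j) (σ (a.succAbove j)) := by
          intro j
          refine (Mk_entry_eq _ _ ?_).symm
          intro hc
          exact (Fin.succAbove_ne a j) (Fin.ext hc.1)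
        rw [h1, h2, Finset.prod_congr rfl fun j _ => hoff j, hab1, hab2]
        ring
      · rw [if_neg h]
        have hee : ∀ i : Fin (m + 1), Mk (m + 1) k i (σ i) = Mk (m + 1) (k + 1) i (σ i) := by
          intro i
          refine Mk_entry_eq _ _ ?_
          intro hc
          have hia : i = a := Fin.ext hc.1
          exact h (by rw [← hia]; exact Fin.ext hc.2)
        rw [Finset.prod_congr rfl fun i _ => hee i]
        ring
    rw [Finset.sum_congr rfl fun σ _ => step σ, ← Finset.mul_sum]
    have hpc := per_cond (Mk (m + 1) k) a b
    rw [hminor, Finset.sum_filter, hab1, one_mul] at hpc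
    rw [hpc]
    rfl
  omega

/-! ### The sign induction -/

def Hinv (t : ℕ) : Prop :=
  (∀ k ≤ 2 * t, 0 < (-1 : ℤ) ^ t * f (2 * t + 2) k) ∧
  f (2 * t + 2) (2 * t + 1) = 0 ∧
  f (2 * t + 2) (2 * t + 2) = 0 ∧
  (∀ k ≤ 2 * t, f (2 * t + 2) k = f (2 * t + 2) (2 * t - k))

lemma f20 : f 2 0 = 2 := by
  have h := F2 1
  rw [Finset.sum_range_succ, Finset.sum_range_one, f_one, f_one] at h
  simpa using h

lemma f21 : f 2 1 = 0 := by
  have h := F1 (m := 1) 0 (by omega)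
  rw [f20, f_one] at h
  simpa using h

lemma f22 : f 2 2 = 0 := by
  have h := F3 1
  rw [f21] at h
  exact h.symm

lemma H_zero : Hinv 0 := by
  refine ⟨?_, ?_, ?_, ?_⟩
  · intro k hk
    interval_cases k
    simpa using f20 ▸ (by norm_num : (0:ℤ) < 2)
  · simpa using f21
  · simpa using f22
  · intro k hk
    interval_cases k
    rfl

section OddRow

lemma L0 (t : ℕ) (k : ℕ) (hk : k ≤ 2 * t + 2) :
    f (2 * t + 3) k = f (2 * t + 3) 0 - 2 * ∑ j ∈ Finset.range k, f (2 * t + 2) j := by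
  induction k with
  | zero => simp
  | succ k ih =>
    have hk' : k ≤ 2 * t + 2 := by omega
    have hklt : k < 2 * t + 2 := by omega
    have h1 := F1 (m := 2 * t + 2) k hklt
    have e : 2 * t + 2 + 1 = 2 * t + 3 := by omega
    rw [e] at h1
    rw [h1, ih hk', Finset.sum_range_succ]
    ring

lemma L1 {t : ℕ} (h : Hinv t) : f (2 * t + 3) 0 = ∑ j ∈ Finset.range (2 * t + 1), f (2 * t + 2) j := by
  have h2 := F2 (2 * t + 2)
  have e : 2 * t + 2 + 1 = 2 * t + 3 := by omega
  rw [e] at h2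
  rw [h2, Finset.sum_range_succ, Finset.sum_range_succ, h.2.1, h.2.2.1]
  ring

lemma L2 {t : ℕ} (h : Hinv t) (k : ℕ) (hk : k ≤ 2 * t + 1) :
    (∑ j ∈ Finset.range k, f (2 * t + 2) j) + ∑ j ∈ Finset.range (2 * t + 1 - k), f (2 * t + 2) j
      = ∑ j ∈ Finset.range (2 * t + 1), f (2 * t + 2) j := by
  have hsub := Finset.sum_Ico_eq_sub (fun j => f (2 * t + 2) j) hk
  have hI : (∑ j ∈ Finset.Ico k (2 * t + 1), f (2 * t + 2) j)
      = ∑ j ∈ Finset.range (2 * t + 1 - k), f (2 * t + 2) (k + j) :=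
    Finset.sum_Ico_eq_sum_range (fun j => f (2 * t + 2) j) k (2 * t + 1)
  have hrefl := Finset.sum_range_reflect (fun j => f (2 * t + 2) (k + j)) (2 * t + 1 - k)
  have hcongr : (∑ j ∈ Finset.range (2 * t + 1 - k),
        (fun j => f (2 * t + 2) (k + j)) (2 * t + 1 - k - 1 - j))
      = ∑ j ∈ Finset.range (2 * t + 1 - k), f (2 * t + 2) j := by
    refine Finset.sum_congr rfl fun j hj => ?_
    have hj' : j < 2 * t + 1 - k := Finset.mem_range.mp hj
    simp only
    have e1 : k + (2 * t + 1 - k - 1 - j) = 2 * t - j := by omega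
    rw [e1, h.2.2.2 (2 * t - j) (by omega)]
    congr 1
    omega
  beta_reduce at hrefl hI hcongr
  linarith [hsub, hI, hrefl, hcongr]

lemma L3 {t : ℕ} (h : Hinv t) (k : ℕ) (hk : k ≤ 2 * t + 1) :
    f (2 * t + 3) k = - f (2 * t + 3) (2 * t + 1 - k) := by
  have e1 := L0 t k (by omega)
  have e2 := L0 t (2 * t + 1 - k) (by omega)
  have e3 := L2 h k hk
  have e4 := L1 h
  linarith

lemma L4 {t : ℕ} (h : Hinv t) (k : ℕ) (hk : k ≤ t) : 0 < (-1 : ℤ) ^ t * f (2 * t + 3) k := by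
  have e1 := L0 t k (by omega)
  have e2 := L0 t (2 * t + 1 - k) (by omega)
  have e3 := L3 h k (by omega)
  have hsub := Finset.sum_Ico_eq_sub (fun j => f (2 * t + 2) j) (show k ≤ 2 * t + 1 - k by omega)
  have key : f (2 * t + 3) k = ∑ j ∈ Finset.Ico k (2 * t + 1 - k), f (2 * t + 2) j := by
    beta_reduce at hsub
    linarith
  rw [key, Finset.mul_sum]
  refine Finset.sum_pos (fun j hj => ?_) ⟨k, Finset.mem_Ico.mpr ⟨le_refl k, by omega⟩⟩
  have hj' := Finset.mem_Ico.mp hj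
  exact h.1 j (by omega)

lemma L5 {t : ℕ} (h : Hinv t) : f (2 * t + 3) (2 * t + 3)
    = - ∑ j ∈ Finset.range (2 * t + 1), f (2 * t + 2) j := by
  have hF3 := F3 (2 * t + 2)
  have e : 2 * t + 2 + 1 = 2 * t + 3 := by omega
  rw [e] at hF3
  have e1 := L0 t (2 * t + 2) (le_refl _)
  have e4 := L1 h
  rw [Finset.sum_range_succ, h.2.1] at e1
  linarith

lemma Cpos {t : ℕ} (h : Hinv t) : 0 < (-1 : ℤ) ^ (t + 1) * f (2 * t + 3) (2 * t + 3) := by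
  rw [L5 h]
  have hpow : ((-1 : ℤ)) ^ (t + 1) = -(-1 : ℤ) ^ t := by rw [pow_succ]; ring
  rw [hpow]
  have : -(-1 : ℤ) ^ t * -∑ j ∈ Finset.range (2 * t + 1), f (2 * t + 2) j
      = ∑ j ∈ Finset.range (2 * t + 1), (-1 : ℤ) ^ t * f (2 * t + 2) j := by
    rw [← Finset.mul_sum]; ring
  rw [this]
  exact Finset.sum_pos (fun j hj => h.1 j (by have := Finset.mem_range.mp hj; omega))
    ⟨0, Finset.mem_range.mpr (by omega)⟩

lemma L6 {t : ℕ} (h : Hinv t) : ∑ j ∈ Finset.range (2 * t + 2), f (2 * t + 3) j = 0 := by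
  have hrefl := Finset.sum_range_reflect (fun j => f (2 * t + 3) j) (2 * t + 2)
  have hcongr : (∑ j ∈ Finset.range (2 * t + 2),
        (fun j => f (2 * t + 3) j) (2 * t + 2 - 1 - j))
      = ∑ j ∈ Finset.range (2 * t + 2), -f (2 * t + 3) j := by
    refine Finset.sum_congr rfl fun j hj => ?_
    have hj' : j < 2 * t + 2 := Finset.mem_range.mp hj
    simp only
    have e1 : 2 * t + 2 - 1 - j = 2 * t + 1 - j := by omega
    rw [e1]
    have := L3 h j (by omega)
    linarith
  beta_reduce at hrefl hcongr
  rw [hcongr, Finset.sum_neg_distrib] at hrefl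
  linarith

end OddRow

section EvenRow

lemma M0 (t : ℕ) (k : ℕ) (hk : k ≤ 2 * t + 3) :
    f (2 * t + 4) k = f (2 * t + 4) 0 - 2 * ∑ j ∈ Finset.range k, f (2 * t + 3) j := by
  induction k with
  | zero => simp
  | succ k ih =>
    have hk' : k ≤ 2 * t + 3 := by omega
    have hklt : k < 2 * t + 3 := by omega
    have h1 := F1 (m := 2 * t + 3) k hklt
    have e : 2 * t + 3 + 1 = 2 * t + 4 := by omega
    rw [e] at h1
    rw [h1, ih hk', Finset.sum_range_succ]
    ring

lemma M1 {t : ℕ} (h : Hinv t) : f (2 * t + 4) 0 = 2 * f (2 * t + 3) (2 * t + 3) := by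
  have h2 := F2 (2 * t + 3)
  have e : 2 * t + 3 + 1 = 2 * t + 4 := by omega
  rw [e] at h2
  have hF3 := F3 (2 * t + 2)
  have e2 : 2 * t + 2 + 1 = 2 * t + 3 := by omega
  rw [e2] at hF3
  have h6 := L6 h
  rw [h2, Finset.sum_range_succ, Finset.sum_range_succ, h6, hF3]
  ring

lemma M2 {t : ℕ} (h : Hinv t) (k : ℕ) (hk : k ≤ 2 * t + 2) :
    (∑ j ∈ Finset.range k, f (2 * t + 3) j)
      = ∑ j ∈ Finset.range (2 * t + 2 - k), f (2 * t + 3) j := by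
  have h6 := L6 h
  have hsub := Finset.sum_Ico_eq_sub (fun j => f (2 * t + 3) j) hk
  have hI := Finset.sum_Ico_eq_sum_range (fun j => f (2 * t + 3) j) k (2 * t + 2)
  have hrefl := Finset.sum_range_reflect (fun j => f (2 * t + 3) (k + j)) (2 * t + 2 - k)
  have hcongr : (∑ j ∈ Finset.range (2 * t + 2 - k),
        (fun j => f (2 * t + 3) (k + j)) (2 * t + 2 - k - 1 - j))
      = ∑ j ∈ Finset.range (2 * t + 2 - k), -f (2 * t + 3) j := by
    refine Finset.sum_congr rfl fun j hj => ?_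
    have hj' : j < 2 * t + 2 - k := Finset.mem_range.mp hj
    simp only
    have e1 : k + (2 * t + 2 - k - 1 - j) = 2 * t + 1 - j := by omega
    rw [e1]
    have := L3 h j (by omega)
    linarith
  beta_reduce at hrefl hI hsub hcongr
  rw [Finset.sum_neg_distrib] at hcongr
  linarith

lemma M3 {t : ℕ} (h : Hinv t) (k : ℕ) (hk : k ≤ 2 * t + 2) :
    f (2 * t + 4) k = f (2 * t + 4) (2 * t + 2 - k) := by
  have e1 := M0 t k (by omega)
  have e2 := M0 t (2 * t + 2 - k) (by omega)
  have e3 := M2 h k hk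
  linarith

lemma M4 {t : ℕ} (h : Hinv t) (k : ℕ) (hk : k ≤ 2 * t + 2) :
    0 < (-1 : ℤ) ^ (t + 1) * f (2 * t + 4) k := by
  have hpow : ((-1 : ℤ)) ^ (t + 1) = -(-1 : ℤ) ^ t := by rw [pow_succ]; ring
  have h0 : 0 < (-1 : ℤ) ^ (t + 1) * f (2 * t + 4) 0 := by
    rw [M1 h]
    have hC := Cpos h
    nlinarith [hC]
  have aux : ∀ k ≤ t + 1, 0 < (-1 : ℤ) ^ (t + 1) * f (2 * t + 4) k := by
    intro k hk'
    have e := M0 t k (by omega)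
    have hs : 0 ≤ ∑ j ∈ Finset.range k, (-1 : ℤ) ^ t * f (2 * t + 3) j :=
      Finset.sum_nonneg fun j hj =>
        le_of_lt (L4 h j (by have := Finset.mem_range.mp hj; omega))
    have hrw : (-1 : ℤ) ^ (t + 1) * f (2 * t + 4) k
        = (-1 : ℤ) ^ (t + 1) * f (2 * t + 4) 0
          + 2 * ∑ j ∈ Finset.range k, (-1 : ℤ) ^ t * f (2 * t + 3) j := by
      rw [e, hpow, ← Finset.mul_sum]
      ring
    linarith
  rcases le_or_gt k (t + 1) with hle | hgt
  · exact aux k hle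
  · rw [M3 h k hk]
    exact aux (2 * t + 2 - k) (by omega)

lemma M5 {t : ℕ} (h : Hinv t) :
    f (2 * t + 4) (2 * t + 3) = 0 ∧ f (2 * t + 4) (2 * t + 4) = 0 := by
  have hF3 := F3 (2 * t + 2)
  have e2 : 2 * t + 2 + 1 = 2 * t + 3 := by omega
  rw [e2] at hF3
  have hF3' := F3 (2 * t + 3)
  have e3 : 2 * t + 3 + 1 = 2 * t + 4 := by omega
  rw [e3] at hF3'
  have e1 := M0 t (2 * t + 3) (le_refl _)
  have h6 := L6 h
  have hM1 := M1 h
  rw [Finset.sum_range_succ, h6, hF3] at e1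
  constructor
  · linarith
  · rw [← hF3']
    linarith

end EvenRow

lemma H_succ {t : ℕ} (h : Hinv t) : Hinv (t + 1) := by
  obtain ⟨hb1, hb2⟩ := M5 h
  have e1 : 2 * (t + 1) + 2 = 2 * t + 4 := by omega
  have e2 : 2 * (t + 1) + 1 = 2 * t + 3 := by omega
  have e3 : 2 * (t + 1) = 2 * t + 2 := by omega
  refine ⟨?_, ?_, ?_, ?_⟩
  · intro k hk
    rw [e1]
    exact M4 h k (by omega)
  · rw [e1, e2]; exact hb1
  · rw [e1]; exact hb2
  · intro k hk
    rw [e1, e3]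
    exact M3 h k (by omega)

lemma H_all (t : ℕ) : Hinv t := by
  induction t with
  | zero => exact H_zero
  | succ t ih => exact H_succ ih

lemma S_eq_f (m : ℕ) : S m = f m m := by
  unfold S f per
  refine Finset.sum_congr rfl fun σ _ => ?_
  have h : (∏ i, Mk m m i (σ i)) =
      ∏ i : Fin m, (if (i : ℕ) < (σ i : ℕ) then (-1 : ℤ) else 1) := by
    refine Finset.prod_congr rfl fun i _ => ?_
    have hi : (i : ℕ) < m := i.isLt
    simp only [Mk, if_pos hi, Nat.add_zero]
    by_cases h : (i : ℕ) < (σ i : ℕ)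
    · rw [if_neg (by omega), if_pos h]
    · rw [if_pos (by omega), if_neg h]
  rw [h, Finset.prod_ite, Finset.prod_const, Finset.prod_const, one_pow, mul_one]
  rfl

theorem sign_alternating_sum_excedances (n : ℕ) (hn : 1 ≤ n) :
    0 < (-1 : ℤ) ^ (n - 1) * S (2 * n - 1) := by
  rcases n with _ | n
  · omega
  rcases n with _ | t
  · -- n = 1
    have : S 1 = 1 := by rw [S_eq_f]; exact f_one 1
    simp [this]
  · -- n = t + 2
    have hC := Cpos (H_all t)
    have e1 : 2 * (t + 2) - 1 = 2 * t + 3 := by omega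
    have e2 : t + 2 - 1 = t + 1 := by omega
    rw [e1, e2, S_eq_f]
    exact hC
end

section
/- For every integer n ≥ 1, the rational number (2^{2n}·(2^{2n} − 1)/(2n)) · B_{2n} is an integer, where B_{2n} is the (2n)-th Bernoulli number; that is, there exists k ∈ ℤ with (2^{2n}·(2^{2n} − 1)/(2n)) · B_{2n} = k. -/
open PowerSeries Finset

noncomputable section TangentAux

namespace TangentAux

abbrev E : ℚ⟦X⟧ := PowerSeries.exp ℚ

lemma derivative_exp : d⁄dX ℚ E = E := by
  ext n
  rw [PowerSeries.coeff_derivative]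
  simp [PowerSeries.coeff_exp, Nat.factorial_succ]
  field_simp

/-- the formal power series x·tanh(x) -/
abbrev b : ℚ⟦X⟧ :=
  rescale (4 : ℚ) (bernoulliPowerSeries ℚ) - rescale (2 : ℚ) (bernoulliPowerSeries ℚ) + X

lemma rescale_mul_exp_sub_one (c : ℕ) :
    rescale (c : ℚ) (bernoulliPowerSeries ℚ) * ((E ^ c) - 1) = PowerSeries.C (c : ℚ) * X := by
  have h := bernoulliPowerSeries_mul_exp_sub_one ℚ
  have h2 := congrArg (rescale (c : ℚ)) h
  rw [map_mul, map_sub, map_one, exp_pow_eq_rescale_exp] at *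
  rw [h2, rescale_X]

lemma key : b * (E ^ 2 - 1) * (E ^ 2 + 1) = X * (E ^ 2 - 1) ^ 2 := by
  have h4 := rescale_mul_exp_sub_one 4
  have h2 := rescale_mul_exp_sub_one 2
  have : (E ^ 2) ^ 2 = E ^ 4 := by ring
  push_cast at h4 h2
  rw [show (PowerSeries.C : ℚ →+* ℚ⟦X⟧) (4:ℚ) = 4 from map_ofNat _ 4] at h4
  rw [show (PowerSeries.C : ℚ →+* ℚ⟦X⟧) (2:ℚ) = 2 from map_ofNat _ 2] at h2
  linear_combination h4 - (E ^ 2 + 1) * h2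


/-- formal tanh -/
abbrev t : ℚ⟦X⟧ := PowerSeries.mk fun k => coeff (k + 1) b

lemma X_mul_t : X * t = b := by
  have hc : ∀ a : ℚ, constantCoeff (rescale a (bernoulliPowerSeries ℚ)) = 1 := by
    intro a
    rw [← coeff_zero_eq_constantCoeff_apply]
    simp [coeff_rescale, bernoulliPowerSeries]
  ext n
  cases n with
  | zero => simp [PowerSeries.coeff_zero_eq_constantCoeff, hc]
  | succ k => simp [PowerSeries.coeff_succ_X_mul]

lemma tanh_eq : t * (E ^ 2 + 1) = E ^ 2 - 1 := by
  have hX : (X : ℚ⟦X⟧) ≠ 0 := X_ne_zero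
  have hE2 : (E ^ 2 : ℚ⟦X⟧) = rescale (2 : ℚ) E := by
    have h := PowerSeries.exp_pow_eq_rescale_exp (A := ℚ) 2
    simpa using h
  have hE : (E ^ 2 - 1 : ℚ⟦X⟧) ≠ 0 := by
    intro h
    have h1 := congrArg (coeff 1) h
    rw [hE2] at h1
    simp [coeff_rescale, PowerSeries.coeff_exp, PowerSeries.coeff_one] at h1
  have hk : X * ((t * (E ^ 2 + 1) - (E ^ 2 - 1)) * (E ^ 2 - 1)) = 0 := by
    linear_combination key + (E ^ 2 + 1) * (E ^ 2 - 1) * X_mul_t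
  rcases mul_eq_zero.1 hk with h | h
  · exact absurd h hX
  rcases mul_eq_zero.1 h with h | h
  · linear_combination h
  · exact absurd h hE

lemma deriv_t : d⁄dX ℚ t = 1 - t ^ 2 := by
  have hd : d⁄dX ℚ (E ^ 2) = 2 * E ^ 2 := by
    rw [pow_two, Derivation.leibniz, derivative_exp]; simp only [smul_eq_mul]; ring
  have h1 : (d⁄dX ℚ t) * (E ^ 2 + 1) + t * (2 * E ^ 2) = 2 * E ^ 2 := by
    have h := congrArg (d⁄dX ℚ) tanh_eq
    rw [Derivation.leibniz] at h
    simp only [map_sub, map_add, Derivation.map_one_eq_zero, hd, smul_eq_mul] at h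
    linear_combination h
  have hne : (E ^ 2 + 1 : ℚ⟦X⟧) ≠ 0 := by
    intro h
    simpa using congrArg (constantCoeff) h
  have : (d⁄dX ℚ t - (1 - t ^ 2)) * ((E ^ 2 + 1) * (E ^ 2 + 1)) = 0 := by
    linear_combination (E ^ 2 + 1) * h1 - (E ^ 2 + 1) * (1 - t) * tanh_eq
  rcases mul_eq_zero.1 this with h | h
  · linear_combination h
  · exact absurd h (mul_ne_zero hne hne)

lemma coeff_t_zero : coeff 0 t = 0 := by
  have h := congrArg (constantCoeff) tanh_eq
  simp only [map_mul, map_add, map_sub, map_one, map_pow, PowerSeries.constantCoeff_exp,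
    one_pow] at h
  rw [coeff_zero_eq_constantCoeff_apply]
  linarith

lemma integral_coeff : ∀ k : ℕ, ∃ m : ℤ, (k.factorial : ℚ) * coeff k t = m := by
  intro k
  induction k using Nat.strong_induction_on with
  | _ k ih =>
    match k with
    | 0 => exact ⟨0, by rw [coeff_t_zero]; simp⟩
    | (k + 1) =>
      choose m hm using fun i (h : i < k + 1) => ih i h
      have hrec : coeff (k + 1) t * (k + 1)
          = (if k = 0 then 1 else 0)
            - ∑ i ∈ Finset.range (k + 1), coeff i t * coeff (k - i) t := by
        have h := congrArg (coeff k) deriv_t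
        rw [PowerSeries.coeff_derivative, map_sub, pow_two, PowerSeries.coeff_mul,
          Finset.Nat.sum_antidiagonal_eq_sum_range_succ
            (fun i j => coeff i t * coeff j t)] at h
        simpa [PowerSeries.coeff_one] using h
      refine ⟨(if k = 0 then 1 else 0)
        - ∑ i ∈ (Finset.range (k + 1)).attach,
            (k.choose i.1 : ℤ) * m i.1 (Finset.mem_range.1 i.2)
              * m (k - i.1) (Nat.lt_succ_of_le (Nat.sub_le k i.1)), ?_⟩
      have h2 : ((k + 1).factorial : ℚ) * coeff (k + 1) t
          = (k.factorial : ℚ) * (coeff (k + 1) t * (k + 1)) := by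
        rw [Nat.factorial_succ]; push_cast; ring
      have hterm : ∀ i ∈ Finset.range (k + 1),
          (k.factorial : ℚ) * (coeff i t * coeff (k - i) t)
          = (k.choose i : ℚ) * ((i.factorial : ℚ) * coeff i t)
            * (((k - i).factorial : ℚ) * coeff (k - i) t) := by
        intro i hi
        have hik : i ≤ k := Nat.lt_succ_iff.1 (Finset.mem_range.1 hi)
        have hq : (k.choose i : ℚ) * (i.factorial : ℚ) * ((k - i).factorial : ℚ)
            = (k.factorial : ℚ) := by
          exact_mod_cast congrArg (Nat.cast : ℕ → ℚ)
            (Nat.choose_mul_factorial_mul_factorial hik)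
        rw [← hq]; ring
      rw [h2, hrec, mul_sub, Finset.mul_sum, Finset.sum_congr rfl hterm]
      have hdel : (k.factorial : ℚ) * (if k = 0 then 1 else 0)
          = (if k = 0 then (1 : ℚ) else 0) := by
        split_ifs with h <;> simp [h]
      rw [hdel]
      push_cast
      rw [← Finset.sum_attach (Finset.range (k + 1))
        (fun i => (k.choose i : ℚ) * ((i.factorial : ℚ) * coeff i t)
          * (((k - i).factorial : ℚ) * coeff (k - i) t))]
      congr 1
      exact Finset.sum_congr rfl fun i _ => by
        rw [hm i (Finset.mem_range.1 i.2), hm (k - i.1) (Nat.lt_succ_of_le (Nat.sub_le k i.1))]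

end TangentAux
end TangentAux

theorem tangent_number_formula_is_integer (n : ℕ) (hn : 1 ≤ n) :
    ∃ k : ℤ,
      (2 ^ (2 * n) * (2 ^ (2 * n) - 1) / (2 * n) : ℚ) * bernoulli (2 * n) = k := by
  open TangentAux PowerSeries in
  obtain ⟨m, hm⟩ := TangentAux.integral_coeff (2 * n - 1)
  refine ⟨m, ?_⟩
  have h2n : 2 * n - 1 + 1 = 2 * n := by omega
  have hb := PowerSeries.coeff_succ_X_mul (2 * n - 1) TangentAux.t
  rw [h2n, TangentAux.X_mul_t] at hb
  have hne1 : 2 * n ≠ 1 := by omega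
  have hbval : PowerSeries.coeff (2 * n) TangentAux.b
      = (4 : ℚ) ^ (2 * n) * ((bernoulli (2 * n) : ℚ) / (2 * n).factorial)
        - (2 : ℚ) ^ (2 * n) * ((bernoulli (2 * n) : ℚ) / (2 * n).factorial) := by
    simp [PowerSeries.coeff_rescale, bernoulliPowerSeries, PowerSeries.coeff_X, hne1]
  rw [← hm, ← hb, hbval]
  have hfact : ((2 * n).factorial : ℚ) = (2 * n) * ((2 * n - 1).factorial) := by
    rw [← h2n, Nat.factorial_succ]
    push_cast [h2n]
    ring
  have h4 : (4 : ℚ) ^ (2 * n) = (2 : ℚ) ^ (2 * n) * 2 ^ (2 * n) := by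
    rw [show (4 : ℚ) = 2 * 2 by norm_num, mul_pow]
  have hn0 : ((2 * n : ℕ) : ℚ) ≠ 0 := by positivity
  have hf0 : (((2 * n - 1).factorial : ℕ) : ℚ) ≠ 0 := by
    exact_mod_cast Nat.cast_ne_zero.2 (Nat.factorial_ne_zero _)
  rw [h4, hfact]
  field_simp
end

section
/- For every odd integer m ≥ 3, the number of up-down alternating permutations of Fin m is even. -/
/-- A permutation of `Fin m` is up-down alternating if it ascends at even positions
and descends at odd positions. -/
def IsUpDown {m : ℕ} (σ : Equiv.Perm (Fin m)) : Prop :=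
  ∀ (i : ℕ) (h : i + 1 < m),
    (Even i → σ ⟨i, Nat.lt_of_succ_lt h⟩ < σ ⟨i + 1, h⟩) ∧
    (Odd i → σ ⟨i + 1, h⟩ < σ ⟨i, Nat.lt_of_succ_lt h⟩)

lemma isUpDown_comp_rev {m : ℕ} (hodd : Odd m) (σ : Equiv.Perm (Fin m))
    (hσ : IsUpDown σ) : IsUpDown (σ * Fin.revPerm) := by
  intro i h
  have hle : i + 2 ≤ m := h
  have h1 : Fin.rev (⟨i, Nat.lt_of_succ_lt h⟩ : Fin m) = ⟨m - 2 - i + 1, by omega⟩ := by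
    ext; simp [Fin.rev]; omega
  have h2 : Fin.rev (⟨i + 1, h⟩ : Fin m) = ⟨m - 2 - i, by omega⟩ := by
    ext; simp [Fin.rev]; omega
  have hj : m - 2 - i + 1 < m := by omega
  have key := hσ (m - 2 - i) hj
  simp only [Equiv.Perm.coe_mul, Function.comp_apply, Fin.revPerm_apply, h1, h2]
  obtain ⟨k, hk⟩ := hodd
  constructor
  · intro hi
    refine (key.2 ?_).trans_eq ?_
    · obtain ⟨l, hl⟩ := hi; exact ⟨k - l - 1, by omega⟩
    · rfl
  · intro hi
    refine ((key.1 ?_).trans_eq ?_)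
    · obtain ⟨l, hl⟩ := hi; exact ⟨k - l - 1, by omega⟩
    · rfl

theorem tangent_number_even (m : ℕ) (hm : 3 ≤ m) (hodd : Odd m) :
    Even (Nat.card {σ : Equiv.Perm (Fin m) // IsUpDown σ}) := by
  classical
  have hm0 : 0 < m := by omega
  set S := {σ : Equiv.Perm (Fin m) // IsUpDown σ}
  have : Fintype S := Fintype.ofFinite S
  -- the involution
  have finv : Function.Involutive (fun σ : S => (⟨σ.1 * Fin.revPerm,
      isUpDown_comp_rev hodd σ.1 σ.2⟩ : S)) := by
    intro σ
    ext x
    simp [Fin.rev_rev]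
  let g : Equiv.Perm S := finv.toPerm _
  have hg2 : g ^ 2 = 1 := by
    ext σ
    simp [g, sq, finv σ]
  have hfree : ∀ σ : S, g σ ≠ σ := by
    intro σ hfix
    have h0 : σ.1 (Fin.rev ⟨0, hm0⟩) = σ.1 ⟨0, hm0⟩ := by
      have := congrArg (fun τ : S => τ.1 ⟨0, hm0⟩) hfix
      simpa [g, Function.Involutive.toPerm] using this
    have : Fin.rev (⟨0, hm0⟩ : Fin m) = ⟨0, hm0⟩ := σ.1.injective h0
    have := congrArg Fin.val this
    simp [Fin.rev] at this
    omega
  have hsup : g.support = Finset.univ := by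
    ext σ; simp [Equiv.Perm.mem_support, hfree σ]
  have := Equiv.Perm.two_dvd_card_support hg2
  rw [hsup] at this
  rw [Nat.card_eq_fintype_card]
  rw [Finset.card_univ] at this
  exact (even_iff_two_dvd).2 this
end
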